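/- For every permutation-invariant definition as above, the permanent of a square matrix A over a commutative ring satisfies Ryser's formula: perm(A) = (-1)^n · ∑_{S ⊆ {1,…,n}} (-1)^{|S|} · ∏_{i=1}^n ∑_{j ∈ S} a_{i,j}. -/

import Mathlib

def perm {n : ℕ} {R : Type*} [CommRing R] (A : Matrix (Fin n) (Fin n) R) : R :=
  ∑ σ : Equiv.Perm (Fin n), ∏ i, A i (σ i)

/-! Expanding `∏ i, ∑ j ∈ S, A i j` gives a sum over the maps `f` with image in `S`. After
swapping the sums, `f` is weighted by `∑_{S ⊇ im f} (-1)^|S|`, which vanishes unless `f` is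
surjective, i.e. a permutation, and is then `(-1)^n`. -/

open Finset Function

lemma sum_powerset_neg_one_pow_card_eq_ite {α R : Type*} [DecidableEq α] [Ring R]
    (T : Finset α) : ∑ U ∈ T.powerset, (-1 : R) ^ #U = if T = ∅ then 1 else 0 := by
  exact_mod_cast congrArg (Int.cast : ℤ → R) (sum_powerset_neg_one_pow_card (x := T))

section
variable {α : Type*} [Fintype α] [DecidableEq α]

lemma sum_superset_neg_one_pow_card {R : Type*} [Ring R] (T : Finset α) :
    ∑ S with T ⊆ S, (-1 : R) ^ #S = if T = univ then (-1) ^ Fintype.card α else 0 := by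
  have hsupersets : ({S | T ⊆ S} : Finset (Finset α)) = Tᶜ.powerset.image (T ∪ ·) := by
    rw [compl_eq_univ_sdiff, ← Icc_eq_image_powerset (subset_univ T)]
    ext S
    simp
  have hinj : Set.InjOn (T ∪ ·) (Tᶜ.powerset : Set (Finset α)) := by
    intro U hU V hV hUV
    simp only [coe_powerset, Set.mem_preimage, Set.mem_powerset_iff, coe_subset,
      subset_compl_iff_disjoint_left] at hU hV
    rw [← union_sdiff_cancel_left hU, ← union_sdiff_cancel_left hV]
    exact congrArg (· \ T) hUV
  calc ∑ S with T ⊆ S, (-1 : R) ^ #S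
      = ∑ U ∈ Tᶜ.powerset, (-1 : R) ^ (#T + #U) := by
        rw [hsupersets, sum_image hinj]
        refine sum_congr rfl fun U hU => ?_
        rw [card_union_of_disjoint (subset_compl_iff_disjoint_left.mp (mem_powerset.mp hU))]
    _ = (-1) ^ #T * if T = univ then 1 else 0 := by
        simp only [pow_add, ← mul_sum, sum_powerset_neg_one_pow_card_eq_ite, compl_eq_empty_iff]
    _ = if T = univ then (-1) ^ Fintype.card α else 0 := by
        split_ifs with hT <;> simp [hT]

lemma sum_surjective_eq_sum_perm {M : Type*} [AddCommMonoid M] (g : (α → α) → M) :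
    ∑ f with Surjective f, g f = ∑ σ : Equiv.Perm α, g σ :=
  (sum_nbij (⇑) (fun σ _ => mem_filter.mpr ⟨mem_univ _, σ.surjective⟩)
    (fun _ _ _ _ h => DFunLike.coe_injective h)
    (fun f hf => ⟨Equiv.ofBijective f (Finite.surjective_iff_bijective.mp (mem_filter.mp hf).2),
      mem_univ _, rfl⟩)
    (fun _ _ => rfl)).symm

lemma image_univ_eq_univ_iff_surjective {β : Type*} [Fintype β] (f : β → α) :
    univ.image f = univ ↔ Surjective f := by
  simp [eq_univ_iff_forall, Surjective]

theorem sum_neg_one_pow_card_mul_prod_sum {R : Type*} [CommRing R] (A : Matrix α α R) :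
    ∑ S : Finset α, (-1 : R) ^ #S * ∏ i, ∑ j ∈ S, A i j
      = (-1) ^ Fintype.card α * ∑ σ : Equiv.Perm α, ∏ i, A i (σ i) := by
  calc ∑ S : Finset α, (-1 : R) ^ #S * ∏ i, ∑ j ∈ S, A i j
      = ∑ S : Finset α, ∑ f ∈ Fintype.piFinset fun _ => S,
          (-1 : R) ^ #S * ∏ i, A i (f i) := by
        refine sum_congr rfl fun S _ => ?_
        rw [prod_univ_sum (fun _ => S) fun i j => A i j, mul_sum]
    _ = ∑ f : α → α, ∑ S with univ.image f ⊆ S, (-1 : R) ^ #S * ∏ i, A i (f i) :=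
        sum_comm' fun S f => by simp [image_subset_iff]
    _ = ∑ f : α → α,
          (if univ.image f = univ then (-1) ^ Fintype.card α else 0) * ∏ i, A i (f i) := by
        simp_rw [← sum_mul, sum_superset_neg_one_pow_card]
    _ = (-1) ^ Fintype.card α * ∑ f with Surjective f, ∏ i, A i (f i) := by
        simp_rw [image_univ_eq_univ_iff_surjective, ite_mul, zero_mul, ← sum_filter, mul_sum]
    _ = (-1) ^ Fintype.card α * ∑ σ : Equiv.Perm α, ∏ i, A i (σ i) := by
        rw [sum_surjective_eq_sum_perm]
end

theorem ryser_formula {n : ℕ} {R : Type*} [CommRing R] (A : Matrix (Fin n) (Fin n) R) :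
    perm A = (-1 : R) ^ n *
      ∑ S : Finset (Fin n), (-1 : R) ^ S.card * ∏ i, ∑ j ∈ S, A i j := by
  rw [sum_neg_one_pow_card_mul_prod_sum, Fintype.card_fin, ← mul_assoc, ← pow_add,
    Even.neg_one_pow ⟨n, rfl⟩, one_mul, perm]
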